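/- For every R > 0 and s ∈ ℝ, ψ_R³(s) = ∫_0^π sin θ · φ_R³(s cos θ) dθ = 2R² sinc²(Rs/2), where φ_R³(t) = ∫_{-R}^{R} |ρ| e^{iρt} dρ. -/

import Mathlib

/-!
Swap the two integrals. The substitution `u = cos θ` turns the inner integral into
`∫_{-1}^{1} e^{iρsu} du = 2 sinc (ρs)`, so `ψ(s) = 2 ∫_{-R}^{R} |ρ| sinc (ρs) dρ`. For `s ≠ 0` the
even integrand equals `sin (|ρ|s) / s`, whence `ψ(s) = 4 (1 - cos (Rs)) / s²`, and the half-angle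
formula `1 - cos x = (x²/2) sinc² (x/2)` gives `2R² sinc² (Rs/2)`; at `s = 0` both
sides equal `2R²`.
-/

open Complex Real

noncomputable def sinc (x : ℝ) : ℝ := if x = 0 then 1 else Real.sin x / x

open MeasureTheory Set

section

variable {E : Type*} [NormedAddCommGroup E] [NormedSpace ℝ E]

theorem intervalIntegral_integral_swap_of_continuous [CompleteSpace E] {f : ℝ → ℝ → E}
    (hf : Continuous (Function.uncurry f)) {a b c d : ℝ} (hab : a ≤ b) (hcd : c ≤ d) :
    ∫ x in a..b, ∫ y in c..d, f x y = ∫ y in c..d, ∫ x in a..b, f x y := by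
  simp only [intervalIntegral.integral_of_le hab, intervalIntegral.integral_of_le hcd]
  refine integral_integral_swap ?_
  rw [Measure.prod_restrict]
  exact (hf.continuousOn.integrableOn_compact (isCompact_Icc.prod isCompact_Icc)).mono_set
    (prod_mono Ioc_subset_Icc_self Ioc_subset_Icc_self)

theorem integral_sin_smul_comp_cos [CompleteSpace E] (g : ℝ → E) :
    ∫ θ in (0)..π, Real.sin θ • g (Real.cos θ) = ∫ u in (-1)..1, g u := by
  have hsin : ∀ θ ∈ Ioo (min 0 π) (max 0 π), -Real.sin θ ≤ 0 := fun θ hθ => by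
    rw [min_eq_left Real.pi_pos.le, max_eq_right Real.pi_pos.le] at hθ
    exact neg_nonpos.mpr (Real.sin_nonneg_of_nonneg_of_le_pi hθ.1.le hθ.2.le)
  have h := intervalIntegral.integral_deriv_smul_comp_of_deriv_nonpos (a := 0) (b := π) (g := g)
    Real.continuous_cos.continuousOn (fun θ _ => Real.hasDerivAt_cos θ) hsin
  simp only [Function.comp_apply, neg_smul, intervalIntegral.integral_neg, Real.cos_zero,
    Real.cos_pi] at h
  rw [intervalIntegral.integral_symm 1 (-1), ← h, neg_neg]

theorem integral_neg_to_self_eq_two_smul_of_even {f : ℝ → E} (heven : ∀ x, f (-x) = f x)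
    {a : ℝ} (hf : IntervalIntegrable f volume 0 a) :
    ∫ x in (-a)..a, f x = (2 : ℝ) • ∫ x in (0)..a, f x := by
  have hneg : ∫ x in (-a)..0, f x = ∫ x in (0)..a, f x := by
    simpa only [heven, neg_zero] using (intervalIntegral.integral_comp_neg (a := 0) (b := a) f).symm
  have hf' : IntervalIntegrable f volume (-a) 0 := by
    simpa only [heven, neg_zero] using ((IntervalIntegrable.iff_comp_neg).mp hf).symm
  rw [← intervalIntegral.integral_add_adjacent_intervals hf' hf, hneg, two_smul]

end

theorem integral_exp_I_mul_eq_two_mul_sinc (a : ℝ) :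
    ∫ u in (-1 : ℝ)..1, Complex.exp (I * a * u) = 2 * Real.sinc a := by
  rcases eq_or_ne a 0 with rfl | ha
  · norm_num
  · have hIa : I * a ≠ 0 := mul_ne_zero I_ne_zero (ofReal_ne_zero.mpr ha)
    rw [integral_exp_mul_complex hIa, Real.sinc_of_ne_zero ha]
    push_cast
    rw [Complex.sin]
    field_simp
    ring_nf
    rw [I_sq]
    ring

theorem integral_sin_mul_exp_I_mul_cos (a : ℝ) :
    ∫ θ in (0)..π, (Real.sin θ : ℂ) * Complex.exp (I * a * Real.cos θ) = 2 * Real.sinc a := by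
  simpa only [Complex.real_smul] using
    (integral_sin_smul_comp_cos fun u : ℝ => Complex.exp (I * a * u)).trans
      (integral_exp_I_mul_eq_two_mul_sinc a)

theorem one_sub_cos_eq_mul_sinc_sq (x : ℝ) :
    1 - Real.cos x = x ^ 2 / 2 * Real.sinc (x / 2) ^ 2 := by
  rcases eq_or_ne x 0 with rfl | hx
  · simp
  · have hx2 : x / 2 ≠ 0 := div_ne_zero hx two_ne_zero
    rw [Real.sinc_of_ne_zero hx2, show x = 2 * (x / 2) by ring, Real.cos_two_mul, Real.cos_sq']
    field_simp
    ring

theorem mul_sinc_mul_of_ne_zero (ρ : ℝ) {s : ℝ} (hs : s ≠ 0) :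
    ρ * Real.sinc (ρ * s) = Real.sin (ρ * s) / s := by
  rcases eq_or_ne ρ 0 with rfl | hρ
  · simp
  · rw [Real.sinc_of_ne_zero (mul_ne_zero hρ hs)]
    field_simp

theorem integral_mul_sinc_mul (R s : ℝ) :
    ∫ ρ in (0)..R, ρ * Real.sinc (ρ * s) = R ^ 2 / 2 * Real.sinc (R * s / 2) ^ 2 := by
  rcases eq_or_ne s 0 with rfl | hs
  · simp [integral_id]
  · simp_rw [mul_sinc_mul_of_ne_zero _ hs]
    rw [intervalIntegral.integral_div, intervalIntegral.integral_comp_mul_right _ hs, integral_sin,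
      zero_mul, Real.cos_zero, one_sub_cos_eq_mul_sinc_sq, smul_eq_mul]
    field_simp

theorem integral_abs_mul_sinc_mul {R : ℝ} (hR : 0 ≤ R) (s : ℝ) :
    ∫ ρ in (-R)..R, |ρ| * Real.sinc (ρ * s) = R ^ 2 * Real.sinc (R * s / 2) ^ 2 := by
  have hcont : Continuous fun ρ : ℝ => |ρ| * Real.sinc (ρ * s) := by fun_prop
  rw [integral_neg_to_self_eq_two_smul_of_even (fun ρ => by simp [neg_mul])
    (hcont.intervalIntegrable 0 R), smul_eq_mul,
    intervalIntegral.integral_congr (g := fun ρ => ρ * Real.sinc (ρ * s)) fun ρ hρ => by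
      rw [uIcc_of_le hR] at hρ; simp only [abs_of_nonneg hρ.1],
    integral_mul_sinc_mul]
  ring

theorem psi_R_three_dim (R s : ℝ) (hR : 0 < R)
    (φ : ℝ → ℂ)
    (hφ : ∀ t, φ t = ∫ ρ in (-R)..R, ((|ρ| : ℝ) : ℂ) * Complex.exp (Complex.I * ρ * t)) :
    (∫ θ in (0:ℝ)..π, (Real.sin θ : ℂ) * φ (s * Real.cos θ)) =
      ((2 * R^2 * (_root_.sinc (R * s / 2))^2 : ℝ) : ℂ) := by
  have hinner (ρ : ℝ) :
      ∫ θ in (0)..π, (Real.sin θ : ℂ) * (((|ρ| : ℝ) : ℂ) * exp (I * ρ * (s * Real.cos θ)))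
        = ((|ρ| * (2 * Real.sinc (ρ * s)) : ℝ) : ℂ) := by
    rw [ofReal_mul, ofReal_mul, ofReal_ofNat, ← integral_sin_mul_exp_I_mul_cos,
      ← intervalIntegral.integral_const_mul]
    congr 1 with θ
    push_cast
    ring_nf
  calc (∫ θ in (0:ℝ)..π, (Real.sin θ : ℂ) * φ (s * Real.cos θ))
      = ∫ θ in (0)..π, ∫ ρ in (-R)..R,
          (Real.sin θ : ℂ) * (((|ρ| : ℝ) : ℂ) * exp (I * ρ * (s * Real.cos θ))) := by
        simp_rw [hφ, ← intervalIntegral.integral_const_mul, ofReal_mul]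
    _ = ∫ ρ in (-R)..R, ((|ρ| * (2 * Real.sinc (ρ * s)) : ℝ) : ℂ) := by
        rw [intervalIntegral_integral_swap_of_continuous (by fun_prop) Real.pi_pos.le (by linarith)]
        simp_rw [hinner]
    _ = ((2 * R ^ 2 * Real.sinc (R * s / 2) ^ 2 : ℝ) : ℂ) := by
        rw [intervalIntegral.integral_ofReal]
        simp_rw [mul_left_comm _ (2 : ℝ)]
        rw [intervalIntegral.integral_const_mul, integral_abs_mul_sinc_mul hR.le, mul_assoc]
    _ = ((2 * R^2 * (_root_.sinc (R * s / 2))^2 : ℝ) : ℂ) := rfl
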